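/- Suppose λ₁, λ₂, λ₃, λ₄ ∈ A satisfy the Cayley–Hamilton relation ∏_{i=1}^{4} (E − λᵢ • e) = 0 in L (product with respect to ∘). Assume moreover that λᵢ − λⱼ is a unit of A for all i ≠ j, and that the elements e, E, E², E³ are linearly independent over A. Then the eigenvalue functions satisfy the system of differential equations δ(E^k)(λᵢ) = λᵢ^k for every integer k ≥ 1 and every i ∈ {1,2,3,4}. -/

import Mathlib

/-!
For `U = E^(m+1)` the F-identity and the Euler property give `P_U(V,W) = (m+1) E^m V W`, so
`D = [U, ·] + (m+1) E^m ·` is a derivation of `L` with `D E = E^(m+1)` and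
`D (t • e) = δ(U)(t) • e`. Applying `D` to `∏ⱼ (E - λⱼ e) = 0` shows that
`q = ∑ₖ ∏_{j ≠ k} (X - λⱼ) · (X^(m+1) - δ(U)(λₖ))` vanishes at `E`. Since `e, E, E², E³` are
independent, `∏ⱼ (X - λⱼ)` divides `q`, and evaluating `q` at `λᵢ` leaves
`(λᵢ^(m+1) - δ(U)(λᵢ)) ∏_{j ≠ i} (λᵢ - λⱼ) = 0`, where the product is a unit.
-/

open Finset

/-- `P_U(V,W) := [U, V∘W] − [U,V]∘W − V∘[U,W]`, where the ring multiplication plays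
the role of `∘` and `br` is the Lie bracket. -/
def Pform {L : Type*} [Mul L] [Sub L] (br : L → L → L) (U V W : L) : L :=
  br U (V * W) - br U V * W - V * br U W

open Polynomial

theorem Derivation.leibniz_prod {R A M ι : Type*} [CommSemiring R] [CommSemiring A] [Algebra R A]
    [AddCommMonoid M] [Module A M] [Module R M] [DecidableEq ι]
    (D : Derivation R A M) (s : Finset ι) (f : ι → A) :
    D (∏ i ∈ s, f i) = ∑ i ∈ s, (∏ j ∈ s.erase i, f j) • D (f i) := by
  induction s using Finset.induction_on with
  | empty => simp
  | insert a s ha ih =>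
    rw [prod_insert ha, D.leibniz, ih, sum_insert ha, erase_insert ha, smul_sum, add_comm]
    congr 1
    refine sum_congr rfl fun i hi => ?_
    rw [erase_insert_of_ne (ne_of_mem_of_not_mem hi ha).symm,
      prod_insert fun h => ha (mem_of_mem_erase h), mul_smul]

theorem Polynomial.dvd_of_aeval_eq_zero_of_linearIndependent {A L : Type*} [CommRing A] [Ring L]
    [Algebra A L] {E : L} {p q : A[X]} {n : ℕ} (hp : p.Monic) (hdeg : p.natDegree ≤ n)
    (hpE : aeval E p = 0) (hli : LinearIndependent A fun i : Fin n => E ^ (i : ℕ))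
    (hq : aeval E q = 0) : p ∣ q := by
  rcases eq_or_ne p 1 with rfl | hp1
  · exact one_dvd q
  rw [← modByMonic_eq_zero_iff_dvd hp]
  set r := q %ₘ p
  have hr : r.natDegree < n := (natDegree_modByMonic_lt q hp hp1).trans_le hdeg
  have hrE : ∑ i : Fin n, r.coeff i • E ^ (i : ℕ) = 0 := by
    rw [Fin.sum_univ_eq_sum_range (fun i => r.coeff i • E ^ i), ← aeval_eq_sum_range' hr,
      aeval_modByMonic_eq_self_of_root hpE, hq]
  have hcoeff := Fintype.linearIndependent_iff.mp hli _ hrE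
  ext i
  rw [coeff_zero]
  rcases lt_or_ge i n with hi | hi
  · exact hcoeff ⟨i, hi⟩
  · exact coeff_eq_zero_of_natDegree_lt (hr.trans_le hi)

theorem Lagrange.eval_sum_nodal_erase_mul {R ι : Type*} [CommRing R] [DecidableEq ι]
    {s : Finset ι} {v : ι → R} (g : ι → R[X]) {i : ι} (hi : i ∈ s) :
    eval (v i) (∑ k ∈ s, nodal (s.erase k) v * g k) =
      eval (v i) (nodal (s.erase i) v) * eval (v i) (g i) := by
  rw [eval_finsetSum, sum_eq_single_of_mem i hi, eval_mul]
  intro k _ hki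
  rw [eval_mul, eval_nodal_at_node (mem_erase.mpr ⟨hki.symm, hi⟩), zero_mul]

theorem eval_eigenvalue_eq_zero_of_derivation {R A L ι : Type*} [CommSemiring R] [CommRing A]
    [CommRing L] [Algebra R L] [Algebra A L] [Fintype ι] [DecidableEq ι]
    (D : Derivation R L L) {E : L} {lam : ι → A} (hCH : ∏ i, (E - lam i • (1 : L)) = 0)
    (hunit : ∀ i j, i ≠ j → IsUnit (lam i - lam j))
    (hli : LinearIndependent A fun i : Fin (Fintype.card ι) => E ^ (i : ℕ))
    {g : ι → A[X]} (hg : ∀ i, D (E - lam i • 1) = aeval E (g i)) (i : ι) :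
    eval (lam i) (g i) = 0 := by
  rcases subsingleton_or_nontrivial A with _ | _
  · exact Subsingleton.elim _ _
  have aeval_nodal (s : Finset ι) :
      aeval E (Lagrange.nodal s lam) = ∏ j ∈ s, (E - lam j • 1) := by
    simp [Lagrange.nodal_eq, Algebra.algebraMap_eq_smul_one]
  set q := ∑ k, Lagrange.nodal (univ.erase k) lam * g k
  have hq : aeval E q = 0 :=
    calc aeval E q = ∑ k, (∏ j ∈ univ.erase k, (E - lam j • 1)) • D (E - lam k • 1) := by
          simp only [q, map_sum, map_mul, aeval_nodal, hg, smul_eq_mul]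
      _ = 0 := by rw [← D.leibniz_prod, hCH, map_zero]
  obtain ⟨r, hr⟩ := dvd_of_aeval_eq_zero_of_linearIndependent Lagrange.nodal_monic
    Lagrange.natDegree_nodal.le (by rw [aeval_nodal, hCH]) hli hq
  have hq_at : eval (lam i) q = 0 := by
    rw [hr, eval_mul, Lagrange.eval_nodal_at_node (mem_univ i), zero_mul]
  rw [Lagrange.eval_sum_nodal_erase_mul g (mem_univ i), Lagrange.eval_nodal] at hq_at
  refine (IsUnit.mul_right_eq_zero ?_).mp hq_at
  exact IsUnit.prod_iff.mpr fun j hj => hunit i j (ne_of_mem_erase hj).symm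

section Bracket

variable {L : Type*} [CommRing L] (br : L → L → L)

theorem bracket_swap (hadd_left : ∀ x y z : L, br (x + y) z = br x z + br y z)
    (hadd_right : ∀ x y z : L, br x (y + z) = br x y + br x z) (halt : ∀ x : L, br x x = 0)
    (x y : L) : br y x = -br x y := by
  have h := halt (x + y)
  rw [hadd_left, hadd_right, hadd_right, halt x, halt y, zero_add, add_zero] at h
  exact eq_neg_of_add_eq_zero_right h

def pformDerivation (hadd_right : ∀ x y z : L, br x (y + z) = br x y + br x z) (U c : L)
    (hU : ∀ V W : L, Pform br U V W = c * (V * W)) : Derivation ℤ L L :=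
  Derivation.mk' (AddMonoidHom.mk' (fun V => br U V + c * V) fun V W => by
      rw [hadd_right]; ring).toIntLinearMap
    fun V W => by
      have h := hU V W
      simp only [Pform] at h
      simp only [AddMonoidHom.coe_toIntLinearMap, AddMonoidHom.mk'_apply, smul_eq_mul]
      linear_combination h

variable {hadd_right : ∀ x y z : L, br x (y + z) = br x y + br x z} {U c : L}
  {hU : ∀ V W : L, Pform br U V W = c * (V * W)}

@[simp]
theorem pformDerivation_apply (V : L) :
    pformDerivation br hadd_right U c hU V = br U V + c * V :=
  rfl

theorem pformDerivation_smul_one {A : Type*} [CommRing A] [Algebra A L] (δ : L → A → A)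
    (hLeib : ∀ (V W : L) (a : A), br V (a • W) = a • br V W + δ V a • W) (t : A) :
    pformDerivation br hadd_right U c hU (t • 1) = δ U t • 1 := by
  have h1 := (pformDerivation br hadd_right U c hU).map_one_eq_zero
  rw [pformDerivation_apply] at h1 ⊢
  rw [hLeib, mul_smul_comm, add_right_comm, ← smul_add, h1, smul_zero, zero_add]

theorem pform_euler_pow_succ
    (hF : ∀ U V W Z : L, Pform br (U * V) W Z = U * Pform br V W Z + V * Pform br U W Z)
    {E : L} (hE : ∀ V W : L, Pform br E V W = V * W) (m : ℕ) (V W : L) :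
    Pform br (E ^ (m + 1)) V W = ((m : L) + 1) * E ^ m * (V * W) := by
  induction m with
  | zero => simpa using hE V W
  | succ n ih =>
    rw [pow_succ' E (n + 1), hF, ih, hE]
    push_cast
    ring

theorem bracket_euler_pow (hadd_right : ∀ x y z : L, br x (y + z) = br x y + br x z)
    (halt : ∀ x : L, br x x = 0) {E : L}
    (hE : ∀ V W : L, Pform br E V W = V * W) (n : ℕ) :
    br E (E ^ n) = ((n : L) - 1) * E ^ n := by
  let D := pformDerivation br hadd_right E 1 fun V W => (hE V W).trans (one_mul _).symm
  have hDE : D E = E := by rw [pformDerivation_apply, halt, zero_add, one_mul]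
  have h := D.leibniz_pow E n
  rw [hDE, pformDerivation_apply, smul_eq_mul] at h
  have hpow : n • (E ^ (n - 1) * E) = (n : L) * E ^ n := by
    rcases n with _ | n <;> simp [pow_succ]
  linear_combination h + hpow

theorem pformDerivation_euler_pow_succ_apply_euler
    (hadd_left : ∀ x y z : L, br (x + y) z = br x z + br y z)
    (hadd_right : ∀ x y z : L, br x (y + z) = br x y + br x z) (halt : ∀ x : L, br x x = 0)
    (hF : ∀ U V W Z : L, Pform br (U * V) W Z = U * Pform br V W Z + V * Pform br U W Z)
    {E : L} (hE : ∀ V W : L, Pform br E V W = V * W) (m : ℕ) :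
    pformDerivation br hadd_right (E ^ (m + 1)) _ (pform_euler_pow_succ br hF hE m) E =
      E ^ (m + 1) := by
  rw [pformDerivation_apply, bracket_swap br hadd_left hadd_right halt,
    bracket_euler_pow br hadd_right halt hE]
  push_cast
  ring

end Bracket

theorem euler_eigenvalue_ode_general {A L : Type*} [CommRing A] [CommRing L]
    [Algebra A L] (br : L → L → L)
    (hadd_left : ∀ x y z : L, br (x + y) z = br x z + br y z)
    (hadd_right : ∀ x y z : L, br x (y + z) = br x y + br x z)
    (halt : ∀ x : L, br x x = 0)
    (δ : L → A → A)
    (hLeib : ∀ (V W : L) (a : A), br V (a • W) = a • br V W + δ V a • W)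
    (hF : ∀ U V W Z : L,
      Pform br (U * V) W Z = U * Pform br V W Z + V * Pform br U W Z)
    (E : L) (hE : ∀ V W : L, Pform br E V W = V * W)
    (lam : Fin 4 → A)
    (hCH : ∏ i : Fin 4, (E - lam i • (1 : L)) = 0)
    (hunit : ∀ i j : Fin 4, i ≠ j → IsUnit (lam i - lam j))
    (hli : LinearIndependent A (fun i : Fin 4 => E ^ (i : ℕ))) :
    ∀ k : ℕ, 1 ≤ k → ∀ i : Fin 4, δ (E ^ k) (lam i) = lam i ^ k := by
  intro k hk i
  obtain ⟨m, rfl⟩ := Nat.exists_eq_add_of_le' hk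
  set D := pformDerivation br hadd_right (E ^ (m + 1)) _ (pform_euler_pow_succ br hF hE m)
  have hD (j : Fin 4) :
      D (E - lam j • 1) = aeval E (X ^ (m + 1) - C (δ (E ^ (m + 1)) (lam j))) := by
    rw [map_sub, pformDerivation_euler_pow_succ_apply_euler br hadd_left hadd_right halt hF hE,
      pformDerivation_smul_one br δ hLeib, map_sub, map_pow, aeval_X, aeval_C,
      Algebra.algebraMap_eq_smul_one]
  have h := eval_eigenvalue_eq_zero_of_derivation D hCH hunit hli hD i
  rw [eval_sub, eval_pow, eval_X, eval_C, sub_eq_zero] at h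
  exact h.symm

/-- if `λ₁,…,λ₄ ∈ A` satisfy the Cayley–Hamilton relation
`∏ᵢ (E − λᵢ • e) = 0`, the differences `λᵢ − λⱼ` (`i ≠ j`) are units of `A`, and
`e, E, E², E³` are linearly independent over `A`, then the eigenvalue functions satisfy the
system of ODEs `δ(E^k)(λᵢ) = λᵢ^k` for all `k ≥ 1` and all `i`. -/
theorem euler_eigenvalue_ode {A L : Type*} [CommRing A] [CommRing L]
    [Algebra A L] (br : L → L → L)
    (hadd_left : ∀ x y z : L, br (x + y) z = br x z + br y z)
    (hadd_right : ∀ x y z : L, br x (y + z) = br x y + br x z)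
    (halt : ∀ x : L, br x x = 0)
    (hjacobi : ∀ x y z : L, br x (br y z) + br y (br z x) + br z (br x y) = 0)
    (δ : L → A → A)
    (hLeib : ∀ (V W : L) (a : A), br V (a • W) = a • br V W + δ V a • W)
    (hF : ∀ U V W Z : L,
      Pform br (U * V) W Z = U * Pform br V W Z + V * Pform br U W Z)
    (E : L) (hE : ∀ V W : L, Pform br E V W = V * W)
    (lam : Fin 4 → A)
    (hCH : ∏ i : Fin 4, (E - lam i • (1 : L)) = 0)
    (hunit : ∀ i j : Fin 4, i ≠ j → IsUnit (lam i - lam j))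
    (hli : LinearIndependent A (fun i : Fin 4 => E ^ (i : ℕ))) :
    ∀ k : ℕ, 1 ≤ k → ∀ i : Fin 4, δ (E ^ k) (lam i) = lam i ^ k :=
  euler_eigenvalue_ode_general br hadd_left hadd_right halt δ hLeib hF E hE lam hCH hunit hli
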